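/- arXiv:1911.12112 — 5 statements merged into one kernel-verified Lean document; each statement's English description precedes it below -/
import Mathlib

section
/- Let p, q ∈ [0,1]⁴ and let R, S, T, P be real numbers. If v ∈ ℝ⁴ satisfies v M(p,q) = v (as a left eigenvector) and v₁+v₂+v₃+v₄ = 1, and if D(p,q) ≠ 0, then v₁R + v₂S + v₃T + v₄P = N(p,q)/D(p,q); that is, the long-run expected utility of the memory-one strategy p against the memory-one opponent q is a ratio of two quadratic forms in p. (Theorem 1 of the paper.) -/
open Matrix BigOperators

/-- The Markov transition matrix of the repeated game when a memory-one
strategy `p` plays against a memory-one opponent `q`. -/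
noncomputable def Mmat (p q : Fin 4 → ℝ) : Matrix (Fin 4) (Fin 4) ℝ :=
  ![![p 0 * q 0, p 0 * (1 - q 0), (1 - p 0) * q 0, (1 - p 0) * (1 - q 0)],
    ![p 1 * q 2, p 1 * (1 - q 2), (1 - p 1) * q 2, (1 - p 1) * (1 - q 2)],
    ![p 2 * q 1, p 2 * (1 - q 1), (1 - p 2) * q 1, (1 - p 2) * (1 - q 1)],
    ![p 3 * q 3, p 3 * (1 - q 3), (1 - p 3) * q 3, (1 - p 3) * (1 - q 3)]]

/-- The matrix `Q̄` of the denominator quadratic form. -/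
noncomputable def Qbar (q : Fin 4 → ℝ) : Matrix (Fin 4) (Fin 4) ℝ :=
  ![![0, -((q 0 - q 2) * (q 1 - q 3 - 1)), (q 0 - q 1) * (q 2 - q 3), (q 0 - q 3) * (q 1 - q 2 - 1)],
    ![-((q 0 - q 2) * (q 1 - q 3 - 1)), 0, (q 1 - q 2) * (q 0 - q 3 - 1), (q 0 - q 1) * (q 2 - q 3)],
    ![(q 0 - q 1) * (q 2 - q 3), (q 1 - q 2) * (q 0 - q 3 - 1), 0, -((q 1 - q 3) * (q 0 - q 2 - 1))],
    ![(q 0 - q 3) * (q 1 - q 2 - 1), (q 0 - q 1) * (q 2 - q 3), -((q 1 - q 3) * (q 0 - q 2 - 1)), 0]]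

/-- The linear coefficients `c̄` of the denominator quadratic form. -/
noncomputable def cbar (q : Fin 4 → ℝ) : Fin 4 → ℝ :=
  ![q 0 * (q 1 - q 3 - 1),
    -((q 2 - 1) * (q 1 - q 3 - 1)),
    -(q 0 * q 1) + q 1 * q 2 + q 1 - q 2 + q 3,
    q 0 * q 3 - q 1 - q 2 * q 3 + q 2 - q 3 + 1]

/-- The constant term `ā` of the denominator quadratic form. -/
noncomputable def abar (q : Fin 4 → ℝ) : ℝ := -(q 1) + q 3 + 1

/-- The denominator quadratic form `D(p, q) = ½ p Q̄ pᵀ + c̄ p + ā`. -/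
noncomputable def Df (p q : Fin 4 → ℝ) : ℝ :=
  (1 / 2) * ∑ i, ∑ j, p i * Qbar q i j * p j + ∑ i, cbar q i * p i + abar q

/-- The matrix `Q` of the numerator quadratic form. -/
noncomputable def Qm (R S T P : ℝ) (q : Fin 4 → ℝ) : Matrix (Fin 4) (Fin 4) ℝ :=
  ![![0, -((q 0 - q 2) * (P * q 1 - P - T * q 3)), (q 0 - q 1) * (P * q 2 - S * q 3),
      (q 0 - q 3) * (S * q 1 - S - T * q 2)],
    ![-((q 0 - q 2) * (P * q 1 - P - T * q 3)), 0, (q 1 - q 2) * (P * q 0 - P - R * q 3),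
      -((q 2 - q 3) * (R * q 1 - R - T * q 0 + T))],
    ![(q 0 - q 1) * (P * q 2 - S * q 3), (q 1 - q 2) * (P * q 0 - P - R * q 3), 0,
      (q 1 - q 3) * (R * q 2 - S * q 0 + S)],
    ![(q 0 - q 3) * (S * q 1 - S - T * q 2), -((q 2 - q 3) * (R * q 1 - R - T * q 0 + T)),
      (q 1 - q 3) * (R * q 2 - S * q 0 + S), 0]]

/-- The linear coefficients `c` of the numerator quadratic form. -/
noncomputable def cv (R S T P : ℝ) (q : Fin 4 → ℝ) : Fin 4 → ℝ :=
  ![q 0 * (P * q 1 - P - T * q 3),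
    -((q 2 - 1) * (P * q 1 - P - T * q 3)),
    -(P * q 0 * q 1) + P * q 1 * q 2 + P * q 1 - P * q 2 + R * q 1 * q 3 - S * q 1 * q 3 + S * q 3,
    -(R * q 1 * q 3) + R * q 3 + S * q 1 * q 3 - S * q 1 - S * q 3 + S + T * q 0 * q 3
      - T * q 2 * q 3 + T * q 2 - T * q 3]

/-- The constant term `a` of the numerator quadratic form. -/
noncomputable def av (R S T P : ℝ) (q : Fin 4 → ℝ) : ℝ := -(P * q 1) + P + T * q 3

/-- The numerator quadratic form `N(p, q) = ½ p Q pᵀ + c p + a`. -/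
noncomputable def Nf (R S T P : ℝ) (p q : Fin 4 → ℝ) : ℝ :=
  (1 / 2) * ∑ i, ∑ j, p i * Qm R S T P q i j * p j + ∑ i, cv R S T P q i * p i + av R S T P q


/-- Theorem 1 of the paper: the long-run expected utility of a memory-one strategy `p`
against a memory-one opponent `q` is a ratio of two quadratic forms. -/
theorem memory_one_utility_is_ratio_of_quadratic_forms
    (p q : Fin 4 → ℝ) (hp : ∀ i, p i ∈ Set.Icc (0 : ℝ) 1) (hq : ∀ i, q i ∈ Set.Icc (0 : ℝ) 1)
    (R S T P : ℝ) (v : Fin 4 → ℝ)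
    (hv : Matrix.vecMul v (Mmat p q) = v)
    (hsum : v 0 + v 1 + v 2 + v 3 = 1)
    (hD : Df p q ≠ 0) :
    v 0 * R + v 1 * S + v 2 * T + v 3 * P = Nf R S T P p q / Df p q := by
  have h0 := congrFun hv 0
  have h1 := congrFun hv 1
  have h2 := congrFun hv 2
  simp only [Mmat, Matrix.vecMul, dotProduct, Fin.sum_univ_four,
    Matrix.cons_val', Matrix.cons_val_zero, Matrix.cons_val_one, Matrix.head_cons,
    Matrix.cons_val_fin_one, Matrix.empty_val', Matrix.head_fin_const,
    Matrix.cons_val_two, Matrix.cons_val_three, Matrix.tail_cons, Matrix.of_apply] at h0 h1 h2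
  rw [eq_div_iff hD]
  simp only [Nf, Df, Qm, Qbar, cv, cbar, av, abar, Fin.sum_univ_four,
    Matrix.cons_val', Matrix.cons_val_zero, Matrix.cons_val_one, Matrix.head_cons,
    Matrix.cons_val_fin_one, Matrix.empty_val', Matrix.head_fin_const,
    Matrix.cons_val_two, Matrix.cons_val_three, Matrix.tail_cons, Matrix.of_apply]
  linear_combination
    (P - R + q 3*T - q 3*R - q 1*P + q 1*R + q 0*P - q 0*T + p 3*S - p 3*R - p 3*q 3*T - p 3*q 3*S + 2*p 3*q 3*R + p 3*q 2*T - p 3*q 2*R - p 3*q 2*q 3*T + p 3*q 2*q 3*R - p 3*q 1*S + p 3*q 1*R + p 3*q 1*q 3*S - p 3*q 1*q 3*R - p 3*q 0*T + p 3*q 0*S + p 3*q 0*q 3*T - p 3*q 0*q 3*S + p 2*q 3*S - p 2*q 3*R - p 2*q 2*P + p 2*q 2*R + p 2*q 1*P - p 2*q 1*R - p 2*q 1*q 3*S + p 2*q 1*q 3*R + p 2*q 1*q 2*P - p 2*q 1*q 2*R + p 2*q 0*P - p 2*q 0*S - p 2*q 0*q 1*P + p 2*q 0*q 1*S - p 2*p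 3*q 3*S + p 2*p 3*q 3*R + p 2*p 3*q 1*S - p 2*p 3*q 1*R - p 1*P + p 1*R - p 1*q 3*T + p 1*q 3*R + p 1*q 2*P - p 1*q 2*R + p 1*q 2*q 3*T - p 1*q 2*q 3*R + p 1*q 1*P - p 1*q 1*R - p 1*q 1*q 2*P + p 1*q 1*q 2*R - p 1*q 0*P + p 1*q 0*T + p 1*q 0*q 2*P - p 1*q 0*q 2*T + p 1*p 3*q 3*T - p 1*p 3*q 3*R - p 1*p 3*q 2*T + p 1*p 3*q 2*R + p 1*p 2*q 2*P - p 1*p 2*q 2*R - p 1*p 2*q 1*P + p 1*p 2*q 1*R + p 0*P - p 0*S + p 0*q 3*T - p 0*q 3*S + p 0*q 2*P - p 0*q 2*T - p 0*q 1*P + p 0*q 1*S - 2*p 0*q 0*P + p 0*q 0*T + p 0*q 0*S - p 0*q 0*q 3*T + p 0*q 0*q 3*S - p 0*q 0*q 2*P + p 0*q 0*q 2*T + p 0*q 0*q 1*P - p 0*q 0*q 1*S - p 0*p 3*q 3*T + p 0*p 3*q 3*S + p 0*p 3*q 0*T - p 0*p 3*q 0*S + p 0*p 2*q 1*P - p 0*p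 2*q 1*S - p 0*p 2*q 0*P + p 0*p 2*q 0*S - p 0*p 1*q 2*P + p 0*p 1*q 2*T + p 0*p 1*q 0*P - p 0*p 1*q 0*T) * h0 +
    (P - S + q 3*T - q 3*S + q 2*P - q 2*T - q 1*P + q 1*S - p 3*q 3*T + p 3*q 3*R - p 3*q 2*q 3*T + p 3*q 2*q 3*R + p 3*q 1*q 3*S - p 3*q 1*q 3*R + p 3*q 0*q 3*T - p 3*q 0*q 3*S + p 2*q 1*P - p 2*q 1*S - p 2*q 1*q 3*S + p 2*q 1*q 3*R + p 2*q 1*q 2*P - p 2*q 1*q 2*R - p 2*q 0*q 1*P + p 2*q 0*q 1*S + p 1*q 2*T - p 1*q 2*R + p 1*q 2*q 3*T - p 1*q 2*q 3*R - p 1*q 1*q 2*P + p 1*q 1*q 2*R + p 1*q 0*q 2*P - p 1*q 0*q 2*T - p 0*q 0*P + p 0*q 0*S - p 0*q 0*q 3*T + p 0*q 0*q 3*S - p 0*q 0*q 2*P + p 0*q 0*q 2*T + p 0*q 0*q 1*P - p 0*q 0*q 1*S) * h1 +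
    (P - T - p 3*T + p 3*S - p 3*q 3*S + p 3*q 3*R + p 2*P - p 2*S + p 2*q 1*S - p 2*q 1*R - p 2*p 3*q 3*S + p 2*p 3*q 3*R + p 2*p 3*q 1*S - p 2*p 3*q 1*R - p 1*P + p 1*T + p 1*q 2*P - p 1*q 2*T + p 1*p 3*q 3*T - p 1*p 3*q 3*R - p 1*p 3*q 2*T + p 1*p 3*q 2*R + p 1*p 2*q 2*P - p 1*p 2*q 2*R - p 1*p 2*q 1*P + p 1*p 2*q 1*R - p 0*q 0*P + p 0*q 0*T - p 0*p 3*q 3*T + p 0*p 3*q 3*S + p 0*p 3*q 0*T - p 0*p 3*q 0*S + p 0*p 2*q 1*P - p 0*p 2*q 1*S - p 0*p 2*q 0*P + p 0*p 2*q 0*S - p 0*p 1*q 2*P + p 0*p 1*q 2*T + p 0*p 1*q 0*P - p 0*p 1*q 0*T) * h2 +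
    (P + q 3*T - q 1*P + p 3*S - p 3*q 3*T - p 3*q 3*S + p 3*q 3*R + p 3*q 2*T - p 3*q 2*q 3*T - p 3*q 1*S + p 3*q 1*q 3*S - p 3*q 1*q 3*R + p 3*q 0*q 3*T + p 2*q 3*S - p 2*q 2*P + p 2*q 1*P - p 2*q 1*q 3*S + p 2*q 1*q 3*R + p 2*q 1*q 2*P - p 2*q 0*q 1*P - p 2*p 3*q 3*S - p 2*p 3*q 2*q 3*R + p 2*p 3*q 1*S + p 2*p 3*q 1*q 2*R + p 2*p 3*q 0*q 3*S - p 2*p 3*q 0*q 1*S - p 1*P - p 1*q 3*T + p 1*q 2*P + p 1*q 2*q 3*T + p 1*q 1*P - p 1*q 1*q 2*P + p 1*p 3*q 3*T - p 1*p 3*q 3*R - p 1*p 3*q 2*T + p 1*p 3*q 2*R + p 1*p 3*q 1*q 3*R - p 1*p 3*q 1*q 2*R - p 1*p 3*q 0*q 3*T + p 1*p 3*q 0*q 2*T + p 1*p 2*q 2*P + p 1*p 2*q 2*q 3*R - p 1*p 2*q 1*P - p 1*p 2*q 1*q 3*R - p 1*p 2*q 0*q 2*P + p 1*p 2*q 0*q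 1*P - p 0*q 0*P - p 0*q 0*q 3*T + p 0*q 0*q 1*P + p 0*p 3*q 3*S + p 0*p 3*q 2*q 3*T - p 0*p 3*q 1*q 3*S - p 0*p 3*q 0*S - p 0*p 3*q 0*q 2*T + p 0*p 3*q 0*q 1*S + p 0*p 2*q 1*q 3*S - p 0*p 2*q 1*q 2*P - p 0*p 2*q 0*q 3*S + p 0*p 2*q 0*q 2*P - p 0*p 1*q 2*P - p 0*p 1*q 2*q 3*T + p 0*p 1*q 1*q 2*P + p 0*p 1*q 0*P + p 0*p 1*q 0*q 3*T - p 0*p 1*q 0*q 1*P) * hsum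
end

section
/- Let p, q ∈ [0,1]⁴. If D(p,q) ≠ 0, then there exists at most one vector v ∈ ℝ⁴ satisfying v M(p,q) = v and v₁+v₂+v₃+v₄ = 1. In other words, nonvanishing of the denominator quadratic form guarantees uniqueness of the normalized left stationary vector of the transition matrix M(p,q). -/
open Matrix BigOperators

lemma my_det_fin_four (A : Matrix (Fin 4) (Fin 4) ℝ) :
    A.det =
      A 0 0 * A 1 1 * A 2 2 * A 3 3 - A 0 0 * A 1 1 * A 2 3 * A 3 2 -
        A 0 0 * A 1 2 * A 2 1 * A 3 3 + A 0 0 * A 1 2 * A 2 3 * A 3 1 +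
        A 0 0 * A 1 3 * A 2 1 * A 3 2 - A 0 0 * A 1 3 * A 2 2 * A 3 1 -
        A 0 1 * A 1 0 * A 2 2 * A 3 3 + A 0 1 * A 1 0 * A 2 3 * A 3 2 +
        A 0 1 * A 1 2 * A 2 0 * A 3 3 - A 0 1 * A 1 2 * A 2 3 * A 3 0 -
        A 0 1 * A 1 3 * A 2 0 * A 3 2 + A 0 1 * A 1 3 * A 2 2 * A 3 0 +
        A 0 2 * A 1 0 * A 2 1 * A 3 3 - A 0 2 * A 1 0 * A 2 3 * A 3 1 -
        A 0 2 * A 1 1 * A 2 0 * A 3 3 + A 0 2 * A 1 1 * A 2 3 * A 3 0 +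
        A 0 2 * A 1 3 * A 2 0 * A 3 1 - A 0 2 * A 1 3 * A 2 1 * A 3 0 -
        A 0 3 * A 1 0 * A 2 1 * A 3 2 + A 0 3 * A 1 0 * A 2 2 * A 3 1 +
        A 0 3 * A 1 1 * A 2 0 * A 3 2 - A 0 3 * A 1 1 * A 2 2 * A 3 0 -
        A 0 3 * A 1 2 * A 2 0 * A 3 1 + A 0 3 * A 1 2 * A 2 1 * A 3 0 := by
  rw [Matrix.det_succ_row_zero]
  simp [Fin.sum_univ_succ, Matrix.det_fin_three, Fin.succ,
    show ((1:Fin 4).succAbove 2) = 3 from rfl, show ((2:Fin 4).succAbove 1) = 1 from rfl,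
    show ((2:Fin 4).succAbove 2) = 3 from rfl, show ((3:Fin 4).succAbove 1) = 1 from rfl,
    show ((3:Fin 4).succAbove 2) = 2 from rfl]
  ring

/-- Nonvanishing of the denominator quadratic form guarantees uniqueness of the
normalized left stationary vector of `M(p,q)`. -/
theorem stationary_vector_unique
    (p q : Fin 4 → ℝ) (hp : ∀ i, p i ∈ Set.Icc (0 : ℝ) 1) (hq : ∀ i, q i ∈ Set.Icc (0 : ℝ) 1)
    (hD : Df p q ≠ 0)
    (v w : Fin 4 → ℝ)
    (hv : Matrix.vecMul v (Mmat p q) = v) (hvsum : v 0 + v 1 + v 2 + v 3 = 1)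
    (hw : Matrix.vecMul w (Mmat p q) = w) (hwsum : w 0 + w 1 + w 2 + w 3 = 1) :
    v = w := by
  set B : Matrix (Fin 4) (Fin 4) ℝ :=
    ![![p 0 * q 0 - 1, p 0 * (1 - q 0), (1 - p 0) * q 0, 1],
      ![p 1 * q 2, p 1 * (1 - q 2) - 1, (1 - p 1) * q 2, 1],
      ![p 2 * q 1, p 2 * (1 - q 1), (1 - p 2) * q 1 - 1, 1],
      ![p 3 * q 3, p 3 * (1 - q 3), (1 - p 3) * q 3, 1]] with hB
  have hdet : B.det = -Df p q := by
    rw [my_det_fin_four]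
    simp [hB, Df, Qbar, cbar, abar, Fin.sum_univ_four, Matrix.vecHead, Matrix.vecTail]
    ring
  have hdet0 : B.det ≠ 0 := by rw [hdet]; exact neg_ne_zero.mpr hD
  have hv0 := congrFun hv 0
  have hv1 := congrFun hv 1
  have hv2 := congrFun hv 2
  have hw0 := congrFun hw 0
  have hw1 := congrFun hw 1
  have hw2 := congrFun hw 2
  simp [Mmat, Matrix.vecMul, dotProduct, Fin.sum_univ_four] at hv0 hv1 hv2 hw0 hw1 hw2
  have hvec : Matrix.vecMul (v - w) B = 0 := by
    funext j
    fin_cases j <;>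
      simp [hB, Matrix.vecMul, dotProduct, Fin.sum_univ_four] <;> linarith
  have := Matrix.eq_zero_of_vecMul_eq_zero hdet0 hvec
  funext i
  have h := congrFun this i
  simpa [sub_eq_zero] using h
end

section
/- Let p ∈ [0,1]⁴, let q⁽¹⁾, …, q⁽ᴺ⁾ ∈ [0,1]⁴ be N opponents, and let R, S, T, P be real numbers. Suppose for each i that v⁽ⁱ⁾ ∈ ℝ⁴ satisfies v⁽ⁱ⁾ M(p,q⁽ⁱ⁾) = v⁽ⁱ⁾ and v⁽ⁱ⁾₁+v⁽ⁱ⁾₂+v⁽ⁱ⁾₃+v⁽ⁱ⁾₄ = 1, and that D(p,q⁽ⁱ⁾) ≠ 0. Then the average utility satisfies (1/N) Σᵢ (v⁽ⁱ⁾₁R + v⁽ⁱ⁾₂S + v⁽ⁱ⁾₃T + v⁽ⁱ⁾₄P) = [(1/N) Σᵢ N(p,q⁽ⁱ⁾) Π_{j≠i} D(p,q⁽ʲ⁾)] / [Πᵢ D(p,q⁽ⁱ⁾)]. -/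
open Matrix BigOperators

private lemma single_opponent (p qq : Fin 4 → ℝ) (R S T P : ℝ) (v : Fin 4 → ℝ)
    (hv : Matrix.vecMul v (Mmat p qq) = v)
    (hsum : v 0 + v 1 + v 2 + v 3 = 1)
    (hD : Df p qq ≠ 0) :
    v 0 * R + v 1 * S + v 2 * T + v 3 * P = Nf R S T P p qq / Df p qq := by
  have e1 := congrFun hv 1
  have e2 := congrFun hv 2
  have e3 := congrFun hv 3
  simp only [Mmat, Matrix.vecMul, dotProduct, Fin.sum_univ_four,
    Matrix.cons_val_zero, Matrix.cons_val_one, Matrix.head_cons,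
    Matrix.cons_val_two, Matrix.tail_cons, Matrix.cons_val_three] at e1 e2 e3
  rw [eq_div_iff hD]
  simp only [Nf, Df, Qm, Qbar, cv, cbar, av, abar, Fin.sum_univ_four,
    Matrix.cons_val_zero, Matrix.cons_val_one, Matrix.head_cons,
    Matrix.cons_val_two, Matrix.tail_cons, Matrix.cons_val_three]
  linear_combination
    ((-(R * (((p 1 * (1 - qq 2) - 1) * ((1 - p 2) * qq 1 - 1) * ((1 - p 3) * (1 - qq 3) - 1) - (p 1 * (1 - qq 2) - 1) * ((1 - p 2) * (1 - qq 1)) * ((1 - p 3) * qq 3) - ((1 - p 1) * qq 2) * (p 2 * (1 - qq 1)) * ((1 - p 3) * (1 - qq 3) - 1) + ((1 - p 1) * qq 2) * ((1 - p 2) * (1 - qq 1)) * (p 3 * (1 - qq 3)) + ((1 - p 1) * (1 - qq 2)) * (p 2 * (1 - qq 1)) * ((1 - p 3) * qq 3) - ((1 - p 1) * (1 - qq 2)) * ((1 - p 2) * qq 1 - 1) * (p 3 * (1 - qq 3)))) + S * (-((p 0 * (1 - qq 0)) * ((1 - p 2) * qq 1 - 1) * ((1 - p 3) * (1 - qq 3)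 - 1) - (p 0 * (1 - qq 0)) * ((1 - p 2) * (1 - qq 1)) * ((1 - p 3) * qq 3) - ((1 - p 0) * qq 0) * (p 2 * (1 - qq 1)) * ((1 - p 3) * (1 - qq 3) - 1) + ((1 - p 0) * qq 0) * ((1 - p 2) * (1 - qq 1)) * (p 3 * (1 - qq 3)) + ((1 - p 0) * (1 - qq 0)) * (p 2 * (1 - qq 1)) * ((1 - p 3) * qq 3) - ((1 - p 0) * (1 - qq 0)) * ((1 - p 2) * qq 1 - 1) * (p 3 * (1 - qq 3)))) + T * (((p 0 * (1 - qq 0)) * ((1 - p 1) * qq 2) * ((1 - p 3) * (1 - qq 3) - 1) - (p 0 * (1 - qq 0)) * ((1 - p 1) * (1 - qq 2)) * ((1 - p 3) * qq 3) - ((1 - p 0) * qq 0) * (p 1 * (1 - qq 2) - 1) * ((1 - p 3) * (1 - qq 3) - 1) + ((1 - p 0) * qq 0) * ((1 - p 1) * (1 - qq 2)) * (p 3 * (1 - qq 3)) + ((1 - p 0) * (1 - qq 0)) * (p 1 * (1 - qq 2) - 1) * ((1 - p 3) * qq 3) - ((1 - p 0) * (1 - qq 0)) * ((1 - p 1) *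 qq 2) * (p 3 * (1 - qq 3)))) + P * (-((p 0 * (1 - qq 0)) * ((1 - p 1) * qq 2) * ((1 - p 2) * (1 - qq 1)) - (p 0 * (1 - qq 0)) * ((1 - p 1) * (1 - qq 2)) * ((1 - p 2) * qq 1 - 1) - ((1 - p 0) * qq 0) * (p 1 * (1 - qq 2) - 1) * ((1 - p 2) * (1 - qq 1)) + ((1 - p 0) * qq 0) * ((1 - p 1) * (1 - qq 2)) * (p 2 * (1 - qq 1)) + ((1 - p 0) * (1 - qq 0)) * (p 1 * (1 - qq 2) - 1) * ((1 - p 2) * qq 1 - 1) - ((1 - p 0) * (1 - qq 0)) * ((1 - p 1) * qq 2) * (p 2 * (1 - qq 1))))))) * hsum +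
    ((-(R * (-((1:ℝ) * ((1 - p 2) * qq 1 - 1) * ((1 - p 3) * (1 - qq 3) - 1) - (1:ℝ) * ((1 - p 2) * (1 - qq 1)) * ((1 - p 3) * qq 3) - ((1 - p 1) * qq 2) * (1:ℝ) * ((1 - p 3) * (1 - qq 3) - 1) + ((1 - p 1) * qq 2) * ((1 - p 2) * (1 - qq 1)) * (1:ℝ) + ((1 - p 1) * (1 - qq 2)) * (1:ℝ) * ((1 - p 3) * qq 3) - ((1 - p 1) * (1 - qq 2)) * ((1 - p 2) * qq 1 - 1) * (1:ℝ))) + S * (((1:ℝ) * ((1 - p 2) * qq 1 - 1) * ((1 - p 3) * (1 - qq 3) - 1) - (1:ℝ) * ((1 - p 2) * (1 - qq 1)) * ((1 - p 3) * qq 3) - ((1 - p 0) * qq 0) * (1:ℝ) * ((1 - p 3) * (1 - qq 3) - 1) + ((1 - p 0) * qq 0) * ((1 - p 2) * (1 - qq 1)) * (1:ℝ) + ((1 - p 0) * (1 - qq 0)) * (1:ℝ) * ((1 - p 3) * qq 3) - ((1 - p 0) * (1 - qq 0)) * ((1 - p 2) * qq 1 - 1) * (1:ℝ))) + T * (-((1:ℝ)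 * ((1 - p 1) * qq 2) * ((1 - p 3) * (1 - qq 3) - 1) - (1:ℝ) * ((1 - p 1) * (1 - qq 2)) * ((1 - p 3) * qq 3) - ((1 - p 0) * qq 0) * (1:ℝ) * ((1 - p 3) * (1 - qq 3) - 1) + ((1 - p 0) * qq 0) * ((1 - p 1) * (1 - qq 2)) * (1:ℝ) + ((1 - p 0) * (1 - qq 0)) * (1:ℝ) * ((1 - p 3) * qq 3) - ((1 - p 0) * (1 - qq 0)) * ((1 - p 1) * qq 2) * (1:ℝ))) + P * (((1:ℝ) * ((1 - p 1) * qq 2) * ((1 - p 2) * (1 - qq 1)) - (1:ℝ) * ((1 - p 1) * (1 - qq 2)) * ((1 - p 2) * qq 1 - 1) - ((1 - p 0) * qq 0) * (1:ℝ) * ((1 - p 2) * (1 - qq 1)) + ((1 - p 0) * qq 0) * ((1 - p 1) * (1 - qq 2)) * (1:ℝ) + ((1 - p 0) * (1 - qq 0)) * (1:ℝ) * ((1 - p 2) * qq 1 - 1) - ((1 - p 0) * (1 - qq 0)) * ((1 - p 1) * qq 2) * (1:ℝ)))))) * e1 +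
    ((-(R * (((1:ℝ) * (p 2 * (1 - qq 1)) * ((1 - p 3) * (1 - qq 3) - 1) - (1:ℝ) * ((1 - p 2) * (1 - qq 1)) * (p 3 * (1 - qq 3)) - (p 1 * (1 - qq 2) - 1) * (1:ℝ) * ((1 - p 3) * (1 - qq 3) - 1) + (p 1 * (1 - qq 2) - 1) * ((1 - p 2) * (1 - qq 1)) * (1:ℝ) + ((1 - p 1) * (1 - qq 2)) * (1:ℝ) * (p 3 * (1 - qq 3)) - ((1 - p 1) * (1 - qq 2)) * (p 2 * (1 - qq 1)) * (1:ℝ))) + S * (-((1:ℝ) * (p 2 * (1 - qq 1)) * ((1 - p 3) * (1 - qq 3) - 1) - (1:ℝ) * ((1 - p 2) * (1 - qq 1)) * (p 3 * (1 - qq 3)) - (p 0 * (1 - qq 0)) * (1:ℝ) * ((1 - p 3) * (1 - qq 3) - 1) + (p 0 * (1 - qq 0)) * ((1 - p 2) * (1 - qq 1)) * (1:ℝ) + ((1 - p 0) * (1 - qq 0)) * (1:ℝ) * (p 3 * (1 - qq 3)) - ((1 - p 0) * (1 - qq 0)) * (p 2 * (1 - qq 1)) * (1:ℝ))) + T * (((1:ℝ)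 * (p 1 * (1 - qq 2) - 1) * ((1 - p 3) * (1 - qq 3) - 1) - (1:ℝ) * ((1 - p 1) * (1 - qq 2)) * (p 3 * (1 - qq 3)) - (p 0 * (1 - qq 0)) * (1:ℝ) * ((1 - p 3) * (1 - qq 3) - 1) + (p 0 * (1 - qq 0)) * ((1 - p 1) * (1 - qq 2)) * (1:ℝ) + ((1 - p 0) * (1 - qq 0)) * (1:ℝ) * (p 3 * (1 - qq 3)) - ((1 - p 0) * (1 - qq 0)) * (p 1 * (1 - qq 2) - 1) * (1:ℝ))) + P * (-((1:ℝ) * (p 1 * (1 - qq 2) - 1) * ((1 - p 2) * (1 - qq 1)) - (1:ℝ) * ((1 - p 1) * (1 - qq 2)) * (p 2 * (1 - qq 1)) - (p 0 * (1 - qq 0)) * (1:ℝ) * ((1 - p 2) * (1 - qq 1)) + (p 0 * (1 - qq 0)) * ((1 - p 1) * (1 - qq 2)) * (1:ℝ) + ((1 - p 0) * (1 - qq 0)) * (1:ℝ) * (p 2 * (1 - qq 1)) - ((1 - p 0) * (1 - qq 0)) * (p 1 * (1 - qq 2) - 1) * (1:ℝ)))))) * e2 +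
    ((-(R * (-((1:ℝ) * (p 2 * (1 - qq 1)) * ((1 - p 3) * qq 3) - (1:ℝ) * ((1 - p 2) * qq 1 - 1) * (p 3 * (1 - qq 3)) - (p 1 * (1 - qq 2) - 1) * (1:ℝ) * ((1 - p 3) * qq 3) + (p 1 * (1 - qq 2) - 1) * ((1 - p 2) * qq 1 - 1) * (1:ℝ) + ((1 - p 1) * qq 2) * (1:ℝ) * (p 3 * (1 - qq 3)) - ((1 - p 1) * qq 2) * (p 2 * (1 - qq 1)) * (1:ℝ))) + S * (((1:ℝ) * (p 2 * (1 - qq 1)) * ((1 - p 3) * qq 3) - (1:ℝ) * ((1 - p 2) * qq 1 - 1) * (p 3 * (1 - qq 3)) - (p 0 * (1 - qq 0)) * (1:ℝ) * ((1 - p 3) * qq 3) + (p 0 * (1 - qq 0)) * ((1 - p 2) * qq 1 - 1) * (1:ℝ) + ((1 - p 0) * qq 0) * (1:ℝ) * (p 3 * (1 - qq 3)) - ((1 - p 0) * qq 0) * (p 2 * (1 - qq 1)) * (1:ℝ))) + T * (-((1:ℝ) * (p 1 * (1 - qq 2) - 1) * ((1 - p 3) * qq 3) - (1:ℝ) * ((1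 - p 1) * qq 2) * (p 3 * (1 - qq 3)) - (p 0 * (1 - qq 0)) * (1:ℝ) * ((1 - p 3) * qq 3) + (p 0 * (1 - qq 0)) * ((1 - p 1) * qq 2) * (1:ℝ) + ((1 - p 0) * qq 0) * (1:ℝ) * (p 3 * (1 - qq 3)) - ((1 - p 0) * qq 0) * (p 1 * (1 - qq 2) - 1) * (1:ℝ))) + P * (((1:ℝ) * (p 1 * (1 - qq 2) - 1) * ((1 - p 2) * qq 1 - 1) - (1:ℝ) * ((1 - p 1) * qq 2) * (p 2 * (1 - qq 1)) - (p 0 * (1 - qq 0)) * (1:ℝ) * ((1 - p 2) * qq 1 - 1) + (p 0 * (1 - qq 0)) * ((1 - p 1) * qq 2) * (1:ℝ) + ((1 - p 0) * qq 0) * (1:ℝ) * (p 2 * (1 - qq 1)) - ((1 - p 0) * qq 0) * (p 1 * (1 - qq 2) - 1) * (1:ℝ)))))) * e3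

/-- The average utility of a memory-one strategy against `N` memory-one opponents. -/
theorem average_utility_against_N_opponents
    (n : ℕ) (hn : 0 < n)
    (p : Fin 4 → ℝ) (hp : ∀ i, p i ∈ Set.Icc (0 : ℝ) 1)
    (q : Fin n → Fin 4 → ℝ) (hq : ∀ i j, q i j ∈ Set.Icc (0 : ℝ) 1)
    (R S T P : ℝ)
    (v : Fin n → Fin 4 → ℝ)
    (hv : ∀ i, Matrix.vecMul (v i) (Mmat p (q i)) = v i)
    (hsum : ∀ i, v i 0 + v i 1 + v i 2 + v i 3 = 1)
    (hD : ∀ i, Df p (q i) ≠ 0) :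
    (1 / (n : ℝ)) * ∑ i, (v i 0 * R + v i 1 * S + v i 2 * T + v i 3 * P) =
      ((1 / (n : ℝ)) *
          ∑ i, Nf R S T P p (q i) * ∏ j ∈ Finset.univ \ {i}, Df p (q j)) /
        ∏ i, Df p (q i) := by
  have key : ∀ i, v i 0 * R + v i 1 * S + v i 2 * T + v i 3 * P
      = Nf R S T P p (q i) / Df p (q i) :=
    fun i => single_opponent p (q i) R S T P (v i) (hv i) (hsum i) (hD i)
  have hPne : (∏ i, Df p (q i)) ≠ 0 :=
    Finset.prod_ne_zero_iff.mpr (fun i _ => hD i)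
  have hterm : ∀ i : Fin n, Nf R S T P p (q i) * ∏ j ∈ Finset.univ \ {i}, Df p (q j)
      = (v i 0 * R + v i 1 * S + v i 2 * T + v i 3 * P) * ∏ j, Df p (q j) := by
    intro i
    rw [key i, Finset.prod_eq_mul_prod_sdiff_singleton_of_mem (Finset.mem_univ i) (fun j => Df p (q j))]
    field_simp
    rw [mul_div_cancel_right₀ _ (hD i)]
  have h2 : (1 / (n : ℝ)) * ∑ i, Nf R S T P p (q i) * ∏ j ∈ Finset.univ \ {i}, Df p (q j)
      = ((1 / (n : ℝ)) * ∑ i, (v i 0 * R + v i 1 * S + v i 2 * T + v i 3 * P)) * ∏ i, Df p (q i) := by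
    rw [Finset.sum_congr rfl (fun i _ => hterm i), ← Finset.sum_mul]
    ring
  rw [h2, mul_div_cancel_right₀ _ hPne]
end

section
/- (Best responses to an unconditional cooperator.) Let R, S, T, P ∈ ℝ with T > R, let q = (1,1,1,1), and let p ∈ [0,1]⁴ with (p₁,p₃) ≠ (1,0) (equivalently D(p,q) > 0). Then the utility u_q(p) = N(p,q)/D(p,q) satisfies u_q(p) ≤ T, with equality if and only if p₃ = 0. In particular, the best responses to the unconditional cooperator are exactly the strategies that never cooperate after the state (D,C). -/
open Matrix BigOperators

/-- Best responses to an unconditional cooperator: the utility is at most `T`, with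
equality exactly when the strategy never cooperates after the state `(D,C)`. -/
theorem best_response_to_cooperator
    (R S T P : ℝ) (hTR : T > R)
    (p : Fin 4 → ℝ) (hp : ∀ i, p i ∈ Set.Icc (0 : ℝ) 1)
    (h : ¬(p 0 = 1 ∧ p 2 = 0)) :
    Nf R S T P p ![1, 1, 1, 1] / Df p ![1, 1, 1, 1] ≤ T ∧
      (Nf R S T P p ![1, 1, 1, 1] / Df p ![1, 1, 1, 1] = T ↔ p 2 = 0) := by
  have h0 := hp 0
  have h2 := hp 2
  have hD : Df p ![1, 1, 1, 1] = 1 - p 0 + p 2 := by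
    simp [Df, Qbar, cbar, abar, Fin.sum_univ_four]
    ring
  have hN : Nf R S T P p ![1, 1, 1, 1] = T - T * p 0 + R * p 2 := by
    simp [Nf, Qm, cv, av, Fin.sum_univ_four]
    ring
  have hDpos : 0 < 1 - p 0 + p 2 := by
    rcases lt_or_eq_of_le h0.2 with h1 | h1
    · nlinarith [h2.1]
    · have : p 2 ≠ 0 := fun hc => h ⟨h1, hc⟩
      have : 0 < p 2 := lt_of_le_of_ne h2.1 (Ne.symm this)
      nlinarith
  rw [hD, hN]
  constructor
  · rw [div_le_iff₀ hDpos]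
    nlinarith [h2.1]
  · rw [div_eq_iff (ne_of_gt hDpos)]
    constructor
    · intro he; nlinarith
    · intro he; rw [he]; ring
end

section
/- (Utility under noise is a ratio of quadratic forms.) Let p, q ∈ [0,1]⁴, R, S, T, P ∈ ℝ, and let s ∈ [0,1] be the probability that an intended action is executed correctly (s = 1 − p_n where p_n is the noise probability, the paper's model replacing each cooperation probability x by s·x). Write p' = (s p₁, s p₂, s p₃, s p₄) and q' = (s q₁, s q₂, s q₃, s q₄). If v ∈ ℝ⁴ satisfies v M(p',q') = v and v₁+v₂+v₃+v₄ = 1, and D(p',q') ≠ 0, then v₁R + v₂S + v₃T + v₄P = (½ s² Σᵢⱼ pᵢ Q(q')ᵢⱼ pⱼ + s Σᵢ c(q')ᵢ pᵢ + a(q')) / (½ s² Σᵢⱼ pᵢ Q̄(q')ᵢⱼ pⱼ + s Σᵢ c̄(q')ᵢ pᵢ + ā(q')); i.e., as a function of p, the noisy utility is again a ratio of two quadratic forms. -/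
open Matrix BigOperators

/-- Utility under noise is again a ratio of two quadratic forms in `p`. -/
theorem noisy_utility_is_ratio_of_quadratic_forms
    (p q : Fin 4 → ℝ) (hp : ∀ i, p i ∈ Set.Icc (0 : ℝ) 1) (hq : ∀ i, q i ∈ Set.Icc (0 : ℝ) 1)
    (R S T P : ℝ) (s : ℝ) (hs : s ∈ Set.Icc (0 : ℝ) 1)
    (v : Fin 4 → ℝ)
    (hv : Matrix.vecMul v (Mmat (fun i => s * p i) (fun i => s * q i)) = v)
    (hsum : v 0 + v 1 + v 2 + v 3 = 1)
    (hD : Df (fun i => s * p i) (fun i => s * q i) ≠ 0) :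
    v 0 * R + v 1 * S + v 2 * T + v 3 * P =
      ((1 / 2) * s ^ 2 *
            ∑ i, ∑ j, p i * Qm R S T P (fun i => s * q i) i j * p j +
          s * ∑ i, cv R S T P (fun i => s * q i) i * p i +
          av R S T P (fun i => s * q i)) /
        ((1 / 2) * s ^ 2 * ∑ i, ∑ j, p i * Qbar (fun i => s * q i) i j * p j +
          s * ∑ i, cbar (fun i => s * q i) i * p i +
          abar (fun i => s * q i)) := by
  have e0 := congrFun hv 0
  have e1 := congrFun hv 1
  have e2 := congrFun hv 2
  simp only [Mmat, Matrix.vecMul, dotProduct, Fin.sum_univ_four,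
    Matrix.cons_val', Matrix.cons_val_zero, Matrix.cons_val_one, Matrix.head_cons,
    Matrix.cons_val_two, Matrix.tail_cons, Matrix.cons_val_three,
    Matrix.empty_val', Matrix.cons_val_fin_one, Matrix.head_fin_const] at e0 e1 e2
  have hDe : ((1 / 2) * s ^ 2 * ∑ i, ∑ j, p i * Qbar (fun i => s * q i) i j * p j +
      s * ∑ i, cbar (fun i => s * q i) i * p i + abar (fun i => s * q i))
      = Df (fun i => s * p i) (fun i => s * q i) := by
    simp only [Df, Qbar, cbar, abar, Fin.sum_univ_four,
      Matrix.cons_val', Matrix.cons_val_zero, Matrix.cons_val_one, Matrix.head_cons,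
    Matrix.cons_val_two, Matrix.tail_cons, Matrix.cons_val_three,
    Matrix.empty_val', Matrix.cons_val_fin_one, Matrix.head_fin_const]
    ring
  rw [hDe, eq_div_iff hD]
  simp only [Df, Nf, Qbar, cbar, abar, Qm, cv, av, Fin.sum_univ_four,
    Matrix.cons_val', Matrix.cons_val_zero, Matrix.cons_val_one, Matrix.head_cons,
    Matrix.cons_val_two, Matrix.tail_cons, Matrix.cons_val_three,
    Matrix.empty_val', Matrix.cons_val_fin_one, Matrix.head_fin_const]
  linear_combination
    (P + (-1) * R + (q 3) * s * T + (-1) * (q 3) * s * R + (-1) * (q 1) * s * P + (q 1) * s * R + (q 0) * s * P + (-1) * (q 0) * s * T + (p 3) * s * S + (-1) * (p 3) * s * R + (-1) * (p 3) * (q 3) * s^2 * T + (-1) * (p 3) * (q 3) * s^2 * S + (2) * (p 3) * (q 3) * s^2 * R + (p 3) * (q 2) * s^2 * T + (-1) * (p 3) * (q 2) * s^2 * R + (-1) * (p 3) * (q 2) * (q 3) * s^3 * T + (p 3) * (q 2) * (q 3) * s^3 * R + (-1) * (p 3) * (q 1) * s^2 * S + (p 3) * (q 1) * s^2 * R + (p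 3) * (q 1) * (q 3) * s^3 * S + (-1) * (p 3) * (q 1) * (q 3) * s^3 * R + (-1) * (p 3) * (q 0) * s^2 * T + (p 3) * (q 0) * s^2 * S + (p 3) * (q 0) * (q 3) * s^3 * T + (-1) * (p 3) * (q 0) * (q 3) * s^3 * S + (p 2) * (q 3) * s^2 * S + (-1) * (p 2) * (q 3) * s^2 * R + (-1) * (p 2) * (q 2) * s^2 * P + (p 2) * (q 2) * s^2 * R + (p 2) * (q 1) * s^2 * P + (-1) * (p 2) * (q 1) * s^2 * R + (-1) * (p 2) * (q 1) * (q 3) * s^3 * S + (p 2) * (q 1) * (q 3) * s^3 * R + (p 2) * (q 1) * (q 2) * s^3 * P + (-1) * (p 2) * (q 1) * (q 2) * s^3 * R + (p 2) * (q 0) * s^2 * P + (-1) * (p 2) * (q 0) * s^2 * S + (-1) * (p 2) * (q 0) * (q 1) * s^3 * P + (p 2) * (q 0) * (q 1) * s^3 * S + (-1) * (p 2) * (p 3) * (q 3) * s^3 * S + (p 2) * (p 3) * (q 3) * s^3 * R + (p 2) * (p 3) * (q 1) * s^3 * S + (-1) * (p 2) * (p 3) * (q 1) * s^3 * R + (-1)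 * (p 1) * s * P + (p 1) * s * R + (-1) * (p 1) * (q 3) * s^2 * T + (p 1) * (q 3) * s^2 * R + (p 1) * (q 2) * s^2 * P + (-1) * (p 1) * (q 2) * s^2 * R + (p 1) * (q 2) * (q 3) * s^3 * T + (-1) * (p 1) * (q 2) * (q 3) * s^3 * R + (p 1) * (q 1) * s^2 * P + (-1) * (p 1) * (q 1) * s^2 * R + (-1) * (p 1) * (q 1) * (q 2) * s^3 * P + (p 1) * (q 1) * (q 2) * s^3 * R + (-1) * (p 1) * (q 0) * s^2 * P + (p 1) * (q 0) * s^2 * T + (p 1) * (q 0) * (q 2) * s^3 * P + (-1) * (p 1) * (q 0) * (q 2) * s^3 * T + (p 1) * (p 3) * (q 3) * s^3 * T + (-1) * (p 1) * (p 3) * (q 3) * s^3 * R + (-1) * (p 1) * (p 3) * (q 2) * s^3 * T + (p 1) * (p 3) * (q 2) * s^3 * R + (p 1) * (p 2) * (q 2) * s^3 * P + (-1) * (p 1) * (p 2) * (q 2) * s^3 * R + (-1) * (p 1) * (p 2) * (q 1) * s^3 * P + (p 1) * (p 2) * (q 1) * s^3 * R + (p 0) * s * P + (-1) * (p 0) *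 s * S + (p 0) * (q 3) * s^2 * T + (-1) * (p 0) * (q 3) * s^2 * S + (p 0) * (q 2) * s^2 * P + (-1) * (p 0) * (q 2) * s^2 * T + (-1) * (p 0) * (q 1) * s^2 * P + (p 0) * (q 1) * s^2 * S + (-2) * (p 0) * (q 0) * s^2 * P + (p 0) * (q 0) * s^2 * T + (p 0) * (q 0) * s^2 * S + (-1) * (p 0) * (q 0) * (q 3) * s^3 * T + (p 0) * (q 0) * (q 3) * s^3 * S + (-1) * (p 0) * (q 0) * (q 2) * s^3 * P + (p 0) * (q 0) * (q 2) * s^3 * T + (p 0) * (q 0) * (q 1) * s^3 * P + (-1) * (p 0) * (q 0) * (q 1) * s^3 * S + (-1) * (p 0) * (p 3) * (q 3) * s^3 * T + (p 0) * (p 3) * (q 3) * s^3 * S + (p 0) * (p 3) * (q 0) * s^3 * T + (-1) * (p 0) * (p 3) * (q 0) * s^3 * S + (p 0) * (p 2) * (q 1) * s^3 * P + (-1) * (p 0) * (p 2) * (q 1) * s^3 * S + (-1) * (p 0) * (p 2) * (q 0) * s^3 * P + (p 0) * (p 2) * (q 0) * s^3 * S + (-1) * (p 0) * (p 1) * (q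 2) * s^3 * P + (p 0) * (p 1) * (q 2) * s^3 * T + (p 0) * (p 1) * (q 0) * s^3 * P + (-1) * (p 0) * (p 1) * (q 0) * s^3 * T) * e0 +
    (P + (-1) * S + (q 3) * s * T + (-1) * (q 3) * s * S + (q 2) * s * P + (-1) * (q 2) * s * T + (-1) * (q 1) * s * P + (q 1) * s * S + (-1) * (p 3) * (q 3) * s^2 * T + (p 3) * (q 3) * s^2 * R + (-1) * (p 3) * (q 2) * (q 3) * s^3 * T + (p 3) * (q 2) * (q 3) * s^3 * R + (p 3) * (q 1) * (q 3) * s^3 * S + (-1) * (p 3) * (q 1) * (q 3) * s^3 * R + (p 3) * (q 0) * (q 3) * s^3 * T + (-1) * (p 3) * (q 0) * (q 3) * s^3 * S + (p 2) * (q 1) * s^2 * P + (-1) * (p 2) * (q 1) * s^2 * S + (-1) * (p 2) * (q 1) * (q 3) * s^3 * S + (p 2) * (q 1) * (q 3) * s^3 * R + (p 2) * (q 1) * (q 2) * s^3 * P + (-1) * (p 2) * (q 1) * (q 2) * s^3 * R + (-1) * (p 2) * (q 0) * (q 1) * s^3 * P + (p 2) * (q 0) * (q 1) * s^3 * S + (p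 1) * (q 2) * s^2 * T + (-1) * (p 1) * (q 2) * s^2 * R + (p 1) * (q 2) * (q 3) * s^3 * T + (-1) * (p 1) * (q 2) * (q 3) * s^3 * R + (-1) * (p 1) * (q 1) * (q 2) * s^3 * P + (p 1) * (q 1) * (q 2) * s^3 * R + (p 1) * (q 0) * (q 2) * s^3 * P + (-1) * (p 1) * (q 0) * (q 2) * s^3 * T + (-1) * (p 0) * (q 0) * s^2 * P + (p 0) * (q 0) * s^2 * S + (-1) * (p 0) * (q 0) * (q 3) * s^3 * T + (p 0) * (q 0) * (q 3) * s^3 * S + (-1) * (p 0) * (q 0) * (q 2) * s^3 * P + (p 0) * (q 0) * (q 2) * s^3 * T + (p 0) * (q 0) * (q 1) * s^3 * P + (-1) * (p 0) * (q 0) * (q 1) * s^3 * S) * e1 +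
    (P + (-1) * T + (-1) * (p 3) * s * T + (p 3) * s * S + (-1) * (p 3) * (q 3) * s^2 * S + (p 3) * (q 3) * s^2 * R + (p 2) * s * P + (-1) * (p 2) * s * S + (p 2) * (q 1) * s^2 * S + (-1) * (p 2) * (q 1) * s^2 * R + (-1) * (p 2) * (p 3) * (q 3) * s^3 * S + (p 2) * (p 3) * (q 3) * s^3 * R + (p 2) * (p 3) * (q 1) * s^3 * S + (-1) * (p 2) * (p 3) * (q 1) * s^3 * R + (-1) * (p 1) * s * P + (p 1) * s * T + (p 1) * (q 2) * s^2 * P + (-1) * (p 1) * (q 2) * s^2 * T + (p 1) * (p 3) * (q 3) * s^3 * T + (-1) * (p 1) * (p 3) * (q 3) * s^3 * R + (-1) * (p 1) * (p 3) * (q 2) * s^3 * T + (p 1) * (p 3) * (q 2) * s^3 * R + (p 1) * (p 2) * (q 2) * s^3 * P + (-1) * (p 1) * (p 2) * (q 2) * s^3 * R + (-1) * (p 1) * (p 2) * (q 1) * s^3 * P + (p 1) * (p 2) * (q 1) * s^3 * R + (-1) * (p 0) * (q 0) * s^2 * P + (p 0) * (q 0) * s^2 * T + (-1) * (p 0) *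 (p 3) * (q 3) * s^3 * T + (p 0) * (p 3) * (q 3) * s^3 * S + (p 0) * (p 3) * (q 0) * s^3 * T + (-1) * (p 0) * (p 3) * (q 0) * s^3 * S + (p 0) * (p 2) * (q 1) * s^3 * P + (-1) * (p 0) * (p 2) * (q 1) * s^3 * S + (-1) * (p 0) * (p 2) * (q 0) * s^3 * P + (p 0) * (p 2) * (q 0) * s^3 * S + (-1) * (p 0) * (p 1) * (q 2) * s^3 * P + (p 0) * (p 1) * (q 2) * s^3 * T + (p 0) * (p 1) * (q 0) * s^3 * P + (-1) * (p 0) * (p 1) * (q 0) * s^3 * T) * e2 +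
    (P + (q 3) * s * T + (-1) * (q 1) * s * P + (p 3) * s * S + (-1) * (p 3) * (q 3) * s^2 * T + (-1) * (p 3) * (q 3) * s^2 * S + (p 3) * (q 3) * s^2 * R + (p 3) * (q 2) * s^2 * T + (-1) * (p 3) * (q 2) * (q 3) * s^3 * T + (-1) * (p 3) * (q 1) * s^2 * S + (p 3) * (q 1) * (q 3) * s^3 * S + (-1) * (p 3) * (q 1) * (q 3) * s^3 * R + (p 3) * (q 0) * (q 3) * s^3 * T + (p 2) * (q 3) * s^2 * S + (-1) * (p 2) * (q 2) * s^2 * P + (p 2) * (q 1) * s^2 * P + (-1) * (p 2) * (q 1) * (q 3) * s^3 * S + (p 2) * (q 1) * (q 3) * s^3 * R + (p 2) * (q 1) * (q 2) * s^3 * P + (-1) * (p 2) * (q 0) * (q 1) * s^3 * P + (-1) * (p 2) * (p 3) * (q 3) * s^3 * S + (-1) * (p 2) * (p 3) * (q 2) * (q 3) * s^4 * R + (p 2) * (p 3) * (q 1) * s^3 * S + (p 2) * (p 3) * (q 1) * (q 2) * s^4 * R + (p 2) * (p 3) * (q 0) * (q 3) * s^4 * S + (-1) * (p 2) * (p 3)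 * (q 0) * (q 1) * s^4 * S + (-1) * (p 1) * s * P + (-1) * (p 1) * (q 3) * s^2 * T + (p 1) * (q 2) * s^2 * P + (p 1) * (q 2) * (q 3) * s^3 * T + (p 1) * (q 1) * s^2 * P + (-1) * (p 1) * (q 1) * (q 2) * s^3 * P + (p 1) * (p 3) * (q 3) * s^3 * T + (-1) * (p 1) * (p 3) * (q 3) * s^3 * R + (-1) * (p 1) * (p 3) * (q 2) * s^3 * T + (p 1) * (p 3) * (q 2) * s^3 * R + (p 1) * (p 3) * (q 1) * (q 3) * s^4 * R + (-1) * (p 1) * (p 3) * (q 1) * (q 2) * s^4 * R + (-1) * (p 1) * (p 3) * (q 0) * (q 3) * s^4 * T + (p 1) * (p 3) * (q 0) * (q 2) * s^4 * T + (p 1) * (p 2) * (q 2) * s^3 * P + (p 1) * (p 2) * (q 2) * (q 3) * s^4 * R + (-1) * (p 1) * (p 2) * (q 1) * s^3 * P + (-1) * (p 1) * (p 2) * (q 1) * (q 3) * s^4 * R + (-1) * (p 1) * (p 2) * (q 0) * (q 2) * s^4 * P + (p 1) * (p 2) * (q 0) * (q 1) * s^4 * P + (-1) * (p 0) * (q 0)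 * s^2 * P + (-1) * (p 0) * (q 0) * (q 3) * s^3 * T + (p 0) * (q 0) * (q 1) * s^3 * P + (p 0) * (p 3) * (q 3) * s^3 * S + (p 0) * (p 3) * (q 2) * (q 3) * s^4 * T + (-1) * (p 0) * (p 3) * (q 1) * (q 3) * s^4 * S + (-1) * (p 0) * (p 3) * (q 0) * s^3 * S + (-1) * (p 0) * (p 3) * (q 0) * (q 2) * s^4 * T + (p 0) * (p 3) * (q 0) * (q 1) * s^4 * S + (p 0) * (p 2) * (q 1) * (q 3) * s^4 * S + (-1) * (p 0) * (p 2) * (q 1) * (q 2) * s^4 * P + (-1) * (p 0) * (p 2) * (q 0) * (q 3) * s^4 * S + (p 0) * (p 2) * (q 0) * (q 2) * s^4 * P + (-1) * (p 0) * (p 1) * (q 2) * s^3 * P + (-1) * (p 0) * (p 1) * (q 2) * (q 3) * s^4 * T + (p 0) * (p 1) * (q 1) * (q 2) * s^4 * P + (p 0) * (p 1) * (q 0) * s^3 * P + (p 0) * (p 1) * (q 0) * (q 3) * s^4 * T + (-1) * (p 0) * (p 1) * (q 0) * (q 1) * s^4 * P) * hsum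
end
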